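/- Let E be a torsion-free group and let π : E → G be a surjective group homomorphism whose kernel is infinite cyclic and contained in the center of E. Then for every finite subgroup H of G, the preimage π⁻¹(H) is an infinite cyclic subgroup of E, and the kernel of π has index equal to the order of H inside π⁻¹(H). -/

import Mathlib

/-!
The kernel `ker π` is central, cyclic and of finite index `|H|` in `K = π⁻¹(H)`. For a central
subgroup `C` of finite index, the transfer `K → C` is `x ↦ x ^ [K : C]`, so this power map is a
homomorphism; by torsion-freeness it is injective, hence `K` embeds in the cyclic group `ker π`.
-/

open Subgroup

namespace Subgroup

variable {G : Type*} [Group G]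

theorem isMulCommutative_of_le_center {C : Subgroup G} (hC : C ≤ center G) :
    IsMulCommutative C :=
  ⟨⟨fun a b => Subtype.ext (mem_center_iff.mp (hC a.2) b).symm⟩⟩

theorem subgroupOf_le_center {N : Subgroup G} (hN : N ≤ center G) (K : Subgroup G) :
    N.subgroupOf K ≤ center K := fun _ hx =>
  mem_center_iff.mpr fun g => Subtype.ext (mem_center_iff.mp (hN (mem_subgroupOf.mp hx)) g)

open scoped IsMulCommutative in
theorem exists_monoidHom_pow_index_of_le_center {C : Subgroup G} (hC : C ≤ center G)
    [C.FiniteIndex] : ∃ f : G →* C, ∀ g, (f g : G) = g ^ C.index := by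
  have := isMulCommutative_of_le_center hC
  refine ⟨MonoidHom.transfer (MonoidHom.id C), fun g => ?_⟩
  rw [MonoidHom.transfer_eq_pow _ g fun k g₀ hk => ?_]
  · rfl
  · rw [← mul_right_inj g₀⁻¹, ← (hC hk).comm, mul_inv_cancel_right]

theorem isCyclic_of_le_center (htf : ∀ g : G, IsOfFinOrder g → g = 1) {C : Subgroup G}
    [IsCyclic C] [C.FiniteIndex] (hC : C ≤ center G) : IsCyclic G := by
  obtain ⟨f, hf⟩ := exists_monoidHom_pow_index_of_le_center hC
  refine isCyclic_of_injective f ((injective_iff_map_eq_one f).2 fun g hg => htf g ?_)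
  refine isOfFinOrder_iff_pow_eq_one.2 ⟨C.index, Nat.pos_of_ne_zero FiniteIndex.index_ne_zero, ?_⟩
  rw [← hf, hg, OneMemClass.coe_one]

theorem isCyclic_of_le_center_of_relIndex_ne_zero (htf : ∀ g : G, IsOfFinOrder g → g = 1)
    {N K : Subgroup G} [IsCyclic N] (hNK : N ≤ K) (hN : N ≤ center G) (hidx : N.relIndex K ≠ 0) :
    IsCyclic K := by
  have : (N.subgroupOf K).FiniteIndex := ⟨hidx⟩
  have : IsCyclic (N.subgroupOf K) :=
    isCyclic_of_surjective (subgroupOfEquivOfLe hNK).symm (subgroupOfEquivOfLe hNK).symm.surjective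
  exact isCyclic_of_le_center (fun g hg => Subtype.ext (htf g (K.subtype.isOfFinOrder hg)))
    (subgroupOf_le_center hN K)

end Subgroup

/-- If `E` is a torsion-free group and `π : E → G` is a surjective homomorphism whose kernel
is infinite cyclic and central, then for every finite subgroup `H` of `G` the preimage
`π⁻¹(H)` is infinite cyclic, and the kernel of `π` has index `|H|` inside `π⁻¹(H)`. -/
theorem preimage_of_finite_subgroup_infinite_cyclic {E G : Type*} [Group E] [Group G]
    (π : E →* G)
    (htf : ∀ e : E, IsOfFinOrder e → e = 1)
    (hsurj : Function.Surjective π)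
    (z : E) (hker : π.ker = Subgroup.zpowers z) (hz : ¬ IsOfFinOrder z)
    (hcentral : π.ker ≤ Subgroup.center E) :
    ∀ H : Subgroup G, Finite H →
      (∃ w : E, ¬ IsOfFinOrder w ∧ H.comap π = Subgroup.zpowers w) ∧
      π.ker.relIndex (H.comap π) = Nat.card H := by
  intro H hH
  have hidx : π.ker.relIndex (H.comap π) = Nat.card H := by
    rw [relIndex_ker, map_comap_eq_self_of_surjective hsurj]
  have : IsCyclic π.ker := hker ▸ isCyclic_zpowers z
  have hcyc : IsCyclic (H.comap π) := isCyclic_of_le_center_of_relIndex_ne_zero htf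
    (π.ker_le_comap H) hcentral (hidx ▸ Nat.card_pos.ne')
  obtain ⟨w, hw⟩ := (H.comap π).isCyclic_iff_exists_zpowers_eq_top.mp hcyc
  have hzw : z ∈ zpowers w := hw ▸ π.ker_le_comap H (hker ▸ mem_zpowers z)
  exact ⟨⟨w, fun hw_fin => hz (hw_fin.of_mem_zpowers hzw), hw.symm⟩, hidx⟩
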